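/- Let G be a graph on n vertices with independence number α ≥ 1 and independence polynomial P(λ) = Σ_k i_k λ^k. Then for all λ > 0, P(λ) ≥ (λ/α + 1/n)·P'(λ). Equivalently, α(G)/ᾱ_G(λ) ≥ 1 + α(G)/(λn), where ᾱ_G(λ) = λP'(λ)/P(λ). -/

import Mathlib

/-!
Let `e(T)` be the number of vertices extending an independent `k`-set `T`. Counting the pairs
`(T, v)` with `v` extending `T` gives `∑ e(T) = (k+1) i_{k+1}`. Counting them with weight `e(T)`
gives `∑ e(T)² = ∑_S ∑_{v ∈ S} e(S - v)` over independent `(k+1)`-sets `S`; a vertex not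
extending `S` extends `S - v` for at most one `v`, so `∑ e(T)² ≤ n i_{k+1} + k(k+2) i_{k+2}`.
Cauchy–Schwarz gives `((k+1) i_{k+1})² ≤ i_k (n i_{k+1} + k(k+2) i_{k+2})`, and downward
induction from `k = α` turns this into `α (k+1) i_{k+1} ≤ n (α - k) i_k`. That is exactly the
nonnegativity of every coefficient of `P - (λ/α + 1/n) P'`, which is therefore nonnegative
at `λ > 0`.
-/

open Finset MeasureTheory Real
open scoped Classical

noncomputable def indSets {V : Type*} [Fintype V] (G : SimpleGraph V) : Finset (Finset V) :=
  Finset.univ.filter (fun s => ∀ u ∈ s, ∀ v ∈ s, ¬ G.Adj u v)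

/-- The independence polynomial (hard-core partition function). -/
noncomputable def indPoly {V : Type*} [Fintype V] (G : SimpleGraph V) (x : ℝ) : ℝ :=
  ∑ s ∈ indSets G, x ^ s.card

/-- Expected size of an independent set from the hard-core model at fugacity x. -/
noncomputable def avgSize {V : Type*} [Fintype V] (G : SimpleGraph V) (x : ℝ) : ℝ :=
  x * deriv (indPoly G) x / indPoly G x

section Counting

variable {V : Type*} [Fintype V] (G : SimpleGraph V)

noncomputable def indSetsOfCard (k : ℕ) : Finset (Finset V) := (indSets G).filter (#· = k)

noncomputable def indCount (k : ℕ) : ℕ := #(indSetsOfCard G k)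

noncomputable def extensions (T : Finset V) : Finset V :=
  univ.filter fun v => v ∉ T ∧ insert v T ∈ indSets G

variable {G}

lemma mem_indSets {s : Finset V} : s ∈ indSets G ↔ ∀ u ∈ s, ∀ v ∈ s, ¬ G.Adj u v := by
  simp [indSets]

lemma mem_indSetsOfCard {s : Finset V} {k : ℕ} :
    s ∈ indSetsOfCard G k ↔ s ∈ indSets G ∧ #s = k :=
  mem_filter

lemma mem_extensions {T : Finset V} {v : V} :
    v ∈ extensions G T ↔ v ∉ T ∧ insert v T ∈ indSets G := by
  simp [extensions]

lemma erase_mem_indSets {S : Finset V} (hS : S ∈ indSets G) (v : V) : S.erase v ∈ indSets G :=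
  mem_indSets.2 fun _ hu _ hw => mem_indSets.1 hS _ (mem_of_mem_erase hu) _ (mem_of_mem_erase hw)

lemma insert_mem_indSets_iff {S : Finset V} (hS : S ∈ indSets G) {u : V} :
    insert u S ∈ indSets G ↔ ∀ w ∈ S, ¬ G.Adj u w := by
  rw [mem_indSets] at hS ⊢
  simp only [mem_insert, forall_eq_or_imp, G.irrefl, not_false_eq_true, true_and]
  exact ⟨fun h => h.1,
    fun h => ⟨h, fun w hw => ⟨fun hadj => h w hw hadj.symm, hS w hw⟩⟩⟩

lemma sum_sum_extensions {M : Type*} [AddCommMonoid M] (k : ℕ) (f : Finset V → V → M) :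
    ∑ T ∈ indSetsOfCard G k, ∑ v ∈ extensions G T, f T v
      = ∑ S ∈ indSetsOfCard G (k + 1), ∑ v ∈ S, f (S.erase v) v := by
  rw [sum_sigma', sum_sigma']
  refine sum_bij' (fun p _ => ⟨insert p.2 p.1, p.2⟩) (fun p _ => ⟨p.1.erase p.2, p.2⟩)
    ?_ ?_ ?_ ?_ ?_
  · rintro ⟨T, v⟩ hp
    simp only [mem_sigma, mem_indSetsOfCard, mem_extensions] at hp ⊢
    exact ⟨⟨hp.2.2, by rw [card_insert_of_notMem hp.2.1, hp.1.2]⟩, mem_insert_self v T⟩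
  · rintro ⟨S, v⟩ hp
    simp only [mem_sigma, mem_indSetsOfCard, mem_extensions] at hp ⊢
    refine ⟨⟨erase_mem_indSets hp.1.1 v, ?_⟩, notMem_erase v S, ?_⟩
    · rw [card_erase_of_mem hp.2, hp.1.2, Nat.add_sub_cancel]
    · rw [insert_erase hp.2]
      exact hp.1.1
  · rintro ⟨T, v⟩ hp
    simp [erase_insert (mem_extensions.1 (mem_sigma.1 hp).2).1]
  · rintro ⟨S, v⟩ hp
    simp [insert_erase (mem_sigma.1 hp).2]
  · rintro ⟨T, v⟩ hp
    simp [erase_insert (mem_extensions.1 (mem_sigma.1 hp).2).1]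

lemma sum_card_extensions (k : ℕ) :
    ∑ T ∈ indSetsOfCard G k, #(extensions G T) = (k + 1) * indCount G (k + 1) := by
  have h := sum_sum_extensions (G := G) k fun _ _ => 1
  simp only [sum_const, smul_eq_mul, mul_one] at h
  rw [h, sum_const_nat fun S hS => (mem_indSetsOfCard.1 hS).2, indCount, mul_comm]

/-- The only candidate is `v = u` when `u ∈ S`, and otherwise a neighbour of `u` in `S`. -/
lemma card_filter_mem_extensions_erase_le_one {S : Finset V} (hS : S ∈ indSets G) {u : V}
    (hu : u ∉ extensions G S) : #{v ∈ S | u ∈ extensions G (S.erase v)} ≤ 1 := by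
  suffices ∃ w, ∀ v ∈ S, u ∈ extensions G (S.erase v) → v = w by
    obtain ⟨w, hw⟩ := this
    exact card_le_one.2 fun a ha b hb => by
      rw [mem_filter] at ha hb
      rw [hw a ha.1 ha.2, hw b hb.1 hb.2]
  by_cases huS : u ∈ S
  · refine ⟨u, fun v _ hv => ?_⟩
    by_contra hvu
    exact (mem_extensions.1 hv).1 (mem_erase.2 ⟨Ne.symm hvu, huS⟩)
  · obtain ⟨w, hwS, hadj⟩ : ∃ w ∈ S, G.Adj u w := by
      by_contra! h
      exact hu (mem_extensions.2 ⟨huS, (insert_mem_indSets_iff hS).2 h⟩)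
    refine ⟨w, fun v _ hv => ?_⟩
    by_contra hvw
    have hindep := (insert_mem_indSets_iff (erase_mem_indSets hS v)).1 (mem_extensions.1 hv).2
    exact hindep w (mem_erase.2 ⟨Ne.symm hvw, hwS⟩) hadj

lemma sum_card_extensions_erase_le {S : Finset V} (hS : S ∈ indSets G) {k : ℕ}
    (hcard : #S = k + 1) :
    ∑ v ∈ S, #(extensions G (S.erase v)) ≤ Fintype.card V + k * #(extensions G S) := by
  have hswap := sum_card_bipartiteAbove_eq_sum_card_bipartiteBelow (s := S) (t := univ)
    (r := fun v u => u ∈ extensions G (S.erase v))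
  simp only [bipartiteAbove, bipartiteBelow, filter_mem_eq_inter, univ_inter] at hswap
  rw [hswap]
  calc ∑ u, #{v ∈ S | u ∈ extensions G (S.erase v)}
      ≤ ∑ u, (1 + k * if u ∈ extensions G S then 1 else 0) := by
        refine sum_le_sum fun u _ => ?_
        split_ifs with hu
        · exact (card_filter_le S _).trans (by omega)
        · simpa using card_filter_mem_extensions_erase_le_one hS hu
    _ = Fintype.card V + k * #(extensions G S) := by
        rw [sum_add_distrib, ← mul_sum, sum_boole]
        simp

lemma sum_sq_card_extensions_le (k : ℕ) :
    ∑ T ∈ indSetsOfCard G k, #(extensions G T) ^ 2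
      ≤ Fintype.card V * indCount G (k + 1) + k * (k + 2) * indCount G (k + 2) := by
  calc ∑ T ∈ indSetsOfCard G k, #(extensions G T) ^ 2
      = ∑ S ∈ indSetsOfCard G (k + 1), ∑ v ∈ S, #(extensions G (S.erase v)) := by
        rw [← sum_sum_extensions k fun T _ => #(extensions G T)]
        simp only [sq, sum_const, smul_eq_mul]
    _ ≤ ∑ S ∈ indSetsOfCard G (k + 1), (Fintype.card V + k * #(extensions G S)) :=
        sum_le_sum fun S hS =>
          sum_card_extensions_erase_le (mem_indSetsOfCard.1 hS).1 (mem_indSetsOfCard.1 hS).2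
    _ = Fintype.card V * indCount G (k + 1) + k * (k + 2) * indCount G (k + 2) := by
        rw [sum_add_distrib, sum_const, ← mul_sum, sum_card_extensions, smul_eq_mul]
        unfold indCount
        ring

lemma sq_succ_mul_indCount_le (k : ℕ) :
    ((k + 1) * indCount G (k + 1)) ^ 2
      ≤ indCount G k *
          (Fintype.card V * indCount G (k + 1) + k * (k + 2) * indCount G (k + 2)) := by
  rw [← sum_card_extensions]
  exact sq_sum_le_card_mul_sum_sq.trans (Nat.mul_le_mul_left _ (sum_sq_card_extensions_le k))

end Counting

section IndependenceNumber

variable {V : Type*} [Fintype V] (G : SimpleGraph V)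

noncomputable def indNum : ℕ := (indSets G).sup Finset.card

variable {G}

lemma indNum_le_card : indNum G ≤ Fintype.card V :=
  Finset.sup_le fun s _ => card_le_univ s

lemma indCount_eq_zero_of_indNum_lt {k : ℕ} (hk : indNum G < k) : indCount G k = 0 := by
  refine card_eq_zero.2 (filter_eq_empty_iff.2 fun s hs hcard => ?_)
  have : #s ≤ indNum G := le_sup hs
  omega

lemma indCount_indNum_pos : 0 < indCount G (indNum G) := by
  obtain ⟨s, hs, hsup⟩ := exists_mem_eq_sup (indSets G) ⟨∅, by simp [mem_indSets]⟩ card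
  exact card_pos.2 ⟨s, mem_indSetsOfCard.2 ⟨hs, hsup.symm⟩⟩

lemma succ_mul_add_le_of_sq_le {N α k x y z : ℕ} (hk : k ≤ α)
    (hcs : ((k + 1) * y) ^ 2 ≤ x * (N * y + k * (k + 2) * z))
    (hnext : α * (k + 2) * z + N * (k + 1) * y ≤ N * α * y) :
    α * (k + 1) * y + N * k * x ≤ N * α * x := by
  rcases y.eq_zero_or_pos with rfl | hy
  · simpa using Nat.mul_le_mul_right x (Nat.mul_le_mul_left N hk)
  refine Nat.le_of_mul_le_mul_left ?_ (Nat.mul_pos k.succ_pos hy)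
  nlinarith [Nat.mul_le_mul_left α hcs, Nat.mul_le_mul_left (k * x) hnext]

/-- The coefficient inequality `(k+1) i_{k+1} ≤ n (1 - k/α) i_k`, cleared of denominators and
of subtraction so that it holds for every `k`. -/
theorem indNum_mul_succ_mul_indCount_add_le (k : ℕ) :
    indNum G * (k + 1) * indCount G (k + 1) + Fintype.card V * k * indCount G k
      ≤ Fintype.card V * indNum G * indCount G k := by
  have vanish : ∀ j, indNum G < j →
      indNum G * (j + 1) * indCount G (j + 1) + Fintype.card V * j * indCount G j
        ≤ Fintype.card V * indNum G * indCount G j := fun j hj => by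
    simp [indCount_eq_zero_of_indNum_lt hj,
      indCount_eq_zero_of_indNum_lt (hj.trans j.lt_succ_self)]
  rcases lt_or_ge (indNum G) k with hk | hk
  · exact vanish k hk
  refine Nat.decreasingInduction' (fun j hj _ ih => ?_) (hk.trans (Nat.le_succ _))
    (vanish _ (Nat.lt_succ_self _))
  exact succ_mul_add_le_of_sq_le (Nat.le_of_lt_succ hj) (sq_succ_mul_indCount_le j) ih

end IndependenceNumber

namespace Polynomial

variable {R : Type*} [CommSemiring R] [PartialOrder R] [IsOrderedRing R]

lemma coeff_mul_pow_le_eval {p : R[X]} (hp : ∀ k, 0 ≤ p.coeff k) {x : R} (hx : 0 ≤ x)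
    (j : ℕ) :
    p.coeff j * x ^ j ≤ p.eval x := by
  rw [eval_eq_sum_range' (n := max (p.natDegree + 1) (j + 1)) (by omega)]
  exact single_le_sum (fun k _ => mul_nonneg (hp k) (pow_nonneg hx k)) (by simp)

lemma eval_nonneg_of_coeff_nonneg {p : R[X]} (hp : ∀ k, 0 ≤ p.coeff k) {x : R} (hx : 0 ≤ x) :
    0 ≤ p.eval x :=
  (hp 0).trans (by simpa using coeff_mul_pow_le_eval hp hx 0)

omit [PartialOrder R] [IsOrderedRing R] in
lemma coeff_X_mul_derivative (p : R[X]) (k : ℕ) : (X * derivative p).coeff k = p.coeff k * k := by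
  cases k <;> simp [coeff_derivative]

end Polynomial

section IndependencePolynomial

open Polynomial

variable {V : Type*} [Fintype V] (G : SimpleGraph V)

noncomputable def indPolynomial : ℝ[X] := ∑ s ∈ indSets G, X ^ #s

variable {G}

lemma eval_indPolynomial (x : ℝ) : (indPolynomial G).eval x = indPoly G x := by
  simp [indPolynomial, indPoly, eval_finsetSum]

lemma coeff_indPolynomial (k : ℕ) : (indPolynomial G).coeff k = indCount G k := by
  simp [indPolynomial, coeff_X_pow, indCount, indSetsOfCard, eq_comm]

lemma deriv_indPoly (x : ℝ) : deriv (indPoly G) x = (derivative (indPolynomial G)).eval x := by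
  rw [← Polynomial.deriv]
  simp_rw [eval_indPolynomial]

lemma coeff_derivative_indPolynomial_nonneg (k : ℕ) :
    0 ≤ (derivative (indPolynomial G)).coeff k := by
  rw [coeff_derivative, coeff_indPolynomial]
  positivity

lemma coeff_indPolynomial_sub_derivative_nonneg (hα : 0 < indNum G) (k : ℕ) :
    0 ≤ (indPolynomial G - (C (indNum G : ℝ)⁻¹ * X + C (Fintype.card V : ℝ)⁻¹)
      * derivative (indPolynomial G)).coeff k := by
  have hN : (0 : ℝ) < Fintype.card V := by exact_mod_cast hα.trans_le indNum_le_card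
  have hα' : (0 : ℝ) < indNum G := by exact_mod_cast hα
  have key : (indNum G : ℝ) * (k + 1) * indCount G (k + 1) + Fintype.card V * k * indCount G k
      ≤ Fintype.card V * indNum G * indCount G k := by
    exact_mod_cast indNum_mul_succ_mul_indCount_add_le k
  simp only [coeff_sub, add_mul, coeff_add, mul_assoc, coeff_C_mul, coeff_X_mul_derivative,
    coeff_derivative, coeff_indPolynomial]
  rw [sub_nonneg, ← mul_le_mul_iff_of_pos_left (mul_pos hα' hN)]
  field_simp
  linarith

lemma derivative_indPolynomial_eval_pos (hα : 0 < indNum G) {x : ℝ} (hx : 0 < x) :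
    0 < (derivative (indPolynomial G)).eval x := by
  refine lt_of_lt_of_le ?_ (coeff_mul_pow_le_eval coeff_derivative_indPolynomial_nonneg hx.le
    (indNum G - 1))
  rw [coeff_derivative, coeff_indPolynomial, Nat.sub_add_cancel hα]
  have := indCount_indNum_pos (G := G)
  positivity

end IndependencePolynomial

theorem stmt16_general {V : Type*} [Fintype V] (G : SimpleGraph V) (α : ℕ)
    (hα : α = (indSets G).sup Finset.card) (hα1 : 1 ≤ α) (l : ℝ) (hl : 0 < l) :
    (l / α + 1 / (Fintype.card V : ℝ)) * deriv (indPoly G) l ≤ indPoly G l ∧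
      1 + (α : ℝ) / (l * (Fintype.card V : ℝ)) ≤ (α : ℝ) / avgSize G l := by
  obtain rfl : α = indNum G := hα
  have hN : (0 : ℝ) < Fintype.card V := by exact_mod_cast hα1.trans indNum_le_card
  have hP' := derivative_indPolynomial_eval_pos hα1 hl
  have hpoly :
      (l / indNum G + 1 / (Fintype.card V : ℝ)) * deriv (indPoly G) l ≤ indPoly G l := by
    have := Polynomial.eval_nonneg_of_coeff_nonneg
      (coeff_indPolynomial_sub_derivative_nonneg hα1) hl.le
    simpa [eval_indPolynomial, deriv_indPoly, div_eq_inv_mul] using this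
  refine ⟨hpoly, ?_⟩
  rw [avgSize, div_div_eq_mul_div, le_div_iff₀ (by rw [deriv_indPoly]; positivity)]
  calc (1 + (indNum G : ℝ) / (l * Fintype.card V)) * (l * deriv (indPoly G) l)
      = indNum G * ((l / indNum G + 1 / (Fintype.card V : ℝ)) * deriv (indPoly G) l) := by
        field_simp
    _ ≤ indNum G * indPoly G l := by gcongr

theorem stmt16 {V : Type*} [Fintype V] [Nonempty V] (G : SimpleGraph V) (α : ℕ)
    (hα : α = (indSets G).sup Finset.card) (hα1 : 1 ≤ α) (l : ℝ) (hl : 0 < l) :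
    (l / α + 1 / (Fintype.card V : ℝ)) * deriv (indPoly G) l ≤ indPoly G l ∧
      1 + (α : ℝ) / (l * (Fintype.card V : ℝ)) ≤ (α : ℝ) / avgSize G l :=
  stmt16_general G α hα hα1 l hl
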